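/- Let d ≥ 2 be an integer, 1 < α < 2, and q ≥ 1. Let b : ℝ^d → [0,∞) be measurable and let g : ℝ^{d+1} → [0,∞) be measurable with ∫_{ℝ^d} g(s,y) dy ≤ 1 for almost every s ∈ ℝ. Define the spatial convolution (b ∗ g)(t,x) := ∫_{ℝ^d} b(x − y) g(t,y) dy. Then ‖(b ∗ g)^{1/(α−1)}‖_{E_q} ≤ ‖b^{1/(α−1)}‖_{M_q}, where both sides take values in [0,∞]. -/

import Mathlib

/-!
With `p = q / (α - 1) ≥ 1`, the `q`-th power of `(b ∗ g)^{1/(α-1)}` is `(b ∗ g)^p`. For almost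
every time `s`, `g(s, ·)` is a sub-probability density, so Jensen's inequality gives
`(b ∗ g(s))^p ≤ b^p ∗ g(s)`. Integrating over a ball of radius `ρ` and exchanging the integrals,
the mass of `(b ∗ g(s))^p` on that ball is at most the largest mass of `b^p` on a ball of radius
`ρ`, which the Morrey norm `M` of `b^{1/(α-1)}` bounds by `|B_ρ| (M / ρ)^q`. Integrating in time
gives the same bound `(M / ρ)^q` for the averages over parabolic cylinders of radius `ρ`.
-/

open MeasureTheory ENNReal Set Filter

noncomputable section

/-- The spatial space `ℝ^d`. -/
abbrev Spc (d : ℕ) := EuclideanSpace ℝ (Fin d)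

/-- Parabolic cylinder `C_ρ(t,x) = {(s,y) : t ≤ s ≤ t + ρ^α, |y - x| ≤ ρ}`. -/
def cylP (d : ℕ) (α ρ t : ℝ) (x : Spc d) : Set (ℝ × Spc d) :=
  {p | t ≤ p.1 ∧ p.1 ≤ t + ρ ^ α ∧ dist p.2 x ≤ ρ}

/-- Average of `f` over the parabolic cylinder `C_ρ(t,x)`. -/
def cylAvg (d : ℕ) (α ρ t : ℝ) (x : Spc d) (f : ℝ × Spc d → ℝ≥0∞) : ℝ≥0∞ :=
  (volume (cylP d α ρ t x))⁻¹ * ∫⁻ p in cylP d α ρ t x, f p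

/-- Parabolic Morrey norm `‖v‖_{E_q}`. -/
def morreyE (d : ℕ) (α q : ℝ) (v : ℝ × Spc d → ℝ≥0∞) : ℝ≥0∞ :=
  ⨆ (ρ : ℝ) (_ : 0 < ρ) (t : ℝ) (x : Spc d),
    ENNReal.ofReal ρ * (cylAvg d α ρ t x (fun p => v p ^ q)) ^ (1 / q)

/-- Elliptic Morrey norm `‖w‖_{M_q}` on `ℝ^d`. -/
def morreyM (d : ℕ) (q : ℝ) (w : Spc d → ℝ≥0∞) : ℝ≥0∞ :=
  ⨆ (ρ : ℝ) (_ : 0 < ρ) (x : Spc d),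
    ENNReal.ofReal ρ *
      ((volume (Metric.closedBall x ρ))⁻¹ *
        ∫⁻ y in Metric.closedBall x ρ, w y ^ q) ^ (1 / q)

/-- Fractional (parabolic) maximal function `M_β f(t,x)`. -/
def maxFun (d : ℕ) (α β : ℝ) (f : ℝ × Spc d → ℝ≥0∞) (t : ℝ) (x : Spc d) : ℝ≥0∞ :=
  ⨆ (ρ : ℝ) (_ : 0 < ρ), ENNReal.ofReal (ρ ^ β) * cylAvg d α ρ t x f

/-- Uncentered parabolic maximal function `M̂ f(z)`, sup over all parabolic
cylinders containing `z`. -/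
def hatM (d : ℕ) (α : ℝ) (f : ℝ × Spc d → ℝ≥0∞) (z : ℝ × Spc d) : ℝ≥0∞ :=
  ⨆ (ρ : ℝ) (_ : 0 < ρ) (t : ℝ) (x : Spc d) (_ : z ∈ cylP d α ρ t x),
    cylAvg d α ρ t x f

/-- The kernel `p_γ(s,y) = 1_{s>0} s^{γ/2} min(|y|^{-d-α}, s^{-(d+α)/α})`. -/
def pKer (d : ℕ) (α γ : ℝ) (s : ℝ) (y : Spc d) : ℝ≥0∞ :=
  if 0 < s then
    (if s ^ (1 / α) ≤ ‖y‖ then ENNReal.ofReal (s ^ (γ / 2) * ‖y‖ ^ (-(d : ℝ) - α))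
     else ENNReal.ofReal (s ^ (γ / 2 - ((d : ℝ) + α) / α)))
  else 0

/-- `P_γ f(t,x) = ∫ p_γ(s,y) f(t+s, x+y) dy ds`. -/
def Pop (d : ℕ) (α γ : ℝ) (f : ℝ × Spc d → ℝ≥0∞) (t : ℝ) (x : Spc d) : ℝ≥0∞ :=
  ∫⁻ p : ℝ × Spc d, pKer d α γ p.1 p.2 * f (t + p.1, x + p.2)

/-- `P*_γ f(t,x) = ∫ p_γ(s,y) f(t-s, x+y) dy ds`. -/
def PopStar (d : ℕ) (α γ : ℝ) (f : ℝ × Spc d → ℝ≥0∞) (t : ℝ) (x : Spc d) : ℝ≥0∞ :=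
  ∫⁻ p : ℝ × Spc d, pKer d α γ p.1 p.2 * f (t - p.1, x + p.2)

section Jensen

variable {X : Type*} [MeasurableSpace X] {μ : Measure X} {p : ℝ}

theorem rpow_lintegral_le_lintegral_rpow (hμ : μ univ ≤ 1) (hp : 1 ≤ p) {h : X → ℝ≥0∞}
    (hh : AEMeasurable h μ) : (∫⁻ x, h x ∂μ) ^ p ≤ ∫⁻ x, h x ^ p ∂μ := by
  rcases hp.eq_or_lt with rfl | hp
  · simp
  have hpq := Real.HolderConjugate.conjExponent hp
  have holder : ∫⁻ x, h x ∂μ ≤ (∫⁻ x, h x ^ p ∂μ) ^ p⁻¹ := by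
    have := ENNReal.lintegral_mul_le_Lp_mul_Lq μ hpq hh aemeasurable_const (g := fun _ => 1)
    simp only [Pi.mul_apply, mul_one, ENNReal.one_rpow, lintegral_const, one_mul, one_div] at this
    exact this.trans
      (mul_le_of_le_one_right' (ENNReal.rpow_le_one hμ (by simp [hpq.symm.nonneg])))
  calc (∫⁻ x, h x ∂μ) ^ p ≤ ((∫⁻ x, h x ^ p ∂μ) ^ p⁻¹) ^ p := by gcongr
    _ = ∫⁻ x, h x ^ p ∂μ := ENNReal.rpow_inv_rpow (by positivity) _

theorem rpow_lintegral_mul_le_lintegral_rpow_mul (hp : 1 ≤ p) {f g : X → ℝ≥0∞}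
    (hf : Measurable f) (hg : Measurable g) (hg1 : ∫⁻ x, g x ∂μ ≤ 1) :
    (∫⁻ x, f x * g x ∂μ) ^ p ≤ ∫⁻ x, f x ^ p * g x ∂μ := by
  have hν : μ.withDensity g univ ≤ 1 := by
    rwa [withDensity_apply _ MeasurableSet.univ, Measure.restrict_univ]
  have := rpow_lintegral_le_lintegral_rpow hν hp hf.aemeasurable
  rw [lintegral_withDensity_eq_lintegral_mul _ hg hf,
    lintegral_withDensity_eq_lintegral_mul _ hg (hf.pow_const p)] at this
  simpa only [Pi.mul_apply, mul_comm (g _)] using this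

end Jensen

section Convolution

open Metric

variable {E : Type*} [NormedAddCommGroup E] [MeasurableSpace E] [BorelSpace E]
  {μ : Measure E} [μ.IsAddRightInvariant]

theorem setLIntegral_closedBall_comp_sub_right (f : E → ℝ≥0∞) (x y : E) (ρ : ℝ) :
    ∫⁻ z in closedBall x ρ, f (z - y) ∂μ = ∫⁻ u in closedBall (x - y) ρ, f u ∂μ := by
  have := (measurePreserving_add_right μ y).setLIntegral_comp_preimage_emb
    (MeasurableEquiv.addRight y).measurableEmbedding (fun z => f (z - y)) (closedBall x ρ)
  simpa using this.symm

theorem setLIntegral_closedBall_rpow_conv_le [SecondCountableTopology E] [SFinite μ]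
    {f g : E → ℝ≥0∞} (hf : Measurable f) (hg : Measurable g) (hg1 : ∫⁻ y, g y ∂μ ≤ 1)
    {p : ℝ} (hp : 1 ≤ p) {ρ : ℝ} {C : ℝ≥0∞}
    (hC : ∀ c, ∫⁻ u in closedBall c ρ, f u ^ p ∂μ ≤ C) (x : E) :
    ∫⁻ z in closedBall x ρ, (∫⁻ y, f (z - y) * g y ∂μ) ^ p ∂μ ≤ C := by
  have hfg : Measurable fun w : E × E => f (w.1 - w.2) ^ p * g w.2 :=
    ((hf.comp measurable_sub).pow_const p).mul (hg.comp measurable_snd)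
  calc ∫⁻ z in closedBall x ρ, (∫⁻ y, f (z - y) * g y ∂μ) ^ p ∂μ
      ≤ ∫⁻ z in closedBall x ρ, ∫⁻ y, f (z - y) ^ p * g y ∂μ ∂μ :=
        lintegral_mono fun z =>
          rpow_lintegral_mul_le_lintegral_rpow_mul hp (hf.comp (measurable_const_sub z)) hg hg1
    _ = ∫⁻ y, (∫⁻ z in closedBall x ρ, f (z - y) ^ p ∂μ) * g y ∂μ := by
        rw [lintegral_lintegral_swap hfg.aemeasurable]
        exact lintegral_congr fun y =>
          lintegral_mul_const _ ((hf.comp (measurable_sub_const y)).pow_const p)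
    _ ≤ ∫⁻ y, C * g y ∂μ := by
        gcongr with y
        rw [setLIntegral_closedBall_comp_sub_right (fun u => f u ^ p)]
        exact hC _
    _ ≤ C := by
        rw [lintegral_const_mul _ hg]
        exact mul_le_of_le_one_right' hg1

end Convolution

section Morrey

open Metric

variable {d : ℕ} {α q ρ : ℝ}

theorem cylP_eq_prod (t : ℝ) (x : Spc d) :
    cylP d α ρ t x = Icc t (t + ρ ^ α) ×ˢ closedBall x ρ := by
  ext z
  simp [cylP, and_assoc]

theorem volume_cylP (t : ℝ) (x : Spc d) :
    volume (cylP d α ρ t x) = ENNReal.ofReal (ρ ^ α) * volume (closedBall x ρ) := by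
  rw [cylP_eq_prod, Measure.volume_eq_prod, Measure.prod_prod, Real.volume_Icc,
    add_sub_cancel_left]

theorem cylAvg_le_of_ae_setLIntegral_le (hρ : 0 < ρ) {t : ℝ} {x : Spc d}
    {F : ℝ × Spc d → ℝ≥0∞} (hF : Measurable F) {K : ℝ≥0∞}
    (hK : ∀ᵐ s, ∫⁻ y in closedBall x ρ, F (s, y) ≤ volume (closedBall x ρ) * K) :
    cylAvg d α ρ t x F ≤ K := by
  have hvol0 : volume (cylP d α ρ t x) ≠ 0 := by
    rw [volume_cylP]
    exact mul_ne_zero (by simpa using Real.rpow_pos_of_pos hρ α)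
      (measure_closedBall_pos volume x hρ).ne'
  have hvolTop : volume (cylP d α ρ t x) ≠ ⊤ := by
    rw [volume_cylP]
    exact ENNReal.mul_ne_top ENNReal.ofReal_ne_top measure_closedBall_lt_top.ne
  have hint : ∫⁻ z in cylP d α ρ t x, F z ≤ volume (cylP d α ρ t x) * K :=
    calc ∫⁻ z in cylP d α ρ t x, F z
        = ∫⁻ s in Icc t (t + ρ ^ α), ∫⁻ y in closedBall x ρ, F (s, y) := by
          rw [cylP_eq_prod, Measure.volume_eq_prod, ← Measure.prod_restrict]
          exact lintegral_prod _ hF.aemeasurable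
      _ ≤ ∫⁻ _ in Icc t (t + ρ ^ α), volume (closedBall x ρ) * K :=
          lintegral_mono_ae (ae_restrict_of_ae hK)
      _ = volume (cylP d α ρ t x) * K := by
          rw [setLIntegral_const, volume_cylP, Real.volume_Icc, add_sub_cancel_left]
          ring
  rw [cylAvg, ENNReal.inv_mul_le_iff hvol0 hvolTop]
  exact hint

theorem setLIntegral_closedBall_rpow_le_morreyM (hq : 0 < q) (hρ : 0 < ρ)
    (w : Spc d → ℝ≥0∞) (c : Spc d) :
    ∫⁻ y in closedBall c ρ, w y ^ q ≤
      volume (closedBall c ρ) * (morreyM d q w / ENNReal.ofReal ρ) ^ q := by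
  have hρ0 : ENNReal.ofReal ρ ≠ 0 := by simpa using hρ
  have hvol0 : volume (closedBall c ρ) ≠ 0 := (measure_closedBall_pos volume c hρ).ne'
  have hvolTop : volume (closedBall c ρ) ≠ ⊤ := measure_closedBall_lt_top.ne
  have hle : ENNReal.ofReal ρ *
      ((volume (closedBall c ρ))⁻¹ * ∫⁻ y in closedBall c ρ, w y ^ q) ^ (1 / q) ≤
        morreyM d q w :=
    le_iSup_of_le ρ (le_iSup_of_le hρ (le_iSup_of_le c le_rfl))
  rw [← ENNReal.inv_mul_le_iff hvol0 hvolTop, ← ENNReal.rpow_le_rpow_iff (one_div_pos.2 hq),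
    ← ENNReal.rpow_mul, mul_one_div_cancel hq.ne', ENNReal.rpow_one,
    ENNReal.le_div_iff_mul_le (Or.inl hρ0) (Or.inl ENNReal.ofReal_ne_top), mul_comm]
  exact hle

theorem morreyE_le_of_cylAvg_le (hq : 0 < q) {v : ℝ × Spc d → ℝ≥0∞} {M : ℝ≥0∞}
    (h : ∀ ρ, 0 < ρ → ∀ t x,
      cylAvg d α ρ t x (fun z => v z ^ q) ≤ (M / ENNReal.ofReal ρ) ^ q) :
    morreyE d α q v ≤ M := by
  refine iSup₂_le fun ρ hρ => iSup₂_le fun t x => ?_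
  calc ENNReal.ofReal ρ * cylAvg d α ρ t x (fun z => v z ^ q) ^ (1 / q)
      ≤ ENNReal.ofReal ρ * ((M / ENNReal.ofReal ρ) ^ q) ^ (1 / q) := by
        gcongr
        exact h ρ hρ t x
    _ = M := by
        rw [← ENNReal.rpow_mul, mul_one_div_cancel hq.ne', ENNReal.rpow_one,
          ENNReal.mul_div_cancel (by simpa using hρ) ENNReal.ofReal_ne_top]

end Morrey

theorem stmt_11_general (d : ℕ) (α q : ℝ) (hα1 : 1 < α) (hα2 : α < 2) (hq : 1 ≤ q)
    (b : Spc d → ℝ) (hb : Measurable b)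
    (g : ℝ × Spc d → ℝ) (hg : Measurable g)
    (hmass : ∀ᵐ s : ℝ, (∫⁻ y : Spc d, ENNReal.ofReal (g (s, y))) ≤ 1) :
    morreyE d α q
        (fun z =>
          (∫⁻ y : Spc d, ENNReal.ofReal (b (z.2 - y)) * ENNReal.ofReal (g (z.1, y)))
            ^ (1 / (α - 1))) ≤
      morreyM d q (fun x => ENNReal.ofReal (b x) ^ (1 / (α - 1))) := by
  have hq0 : 0 < q := by linarith
  have hp : 1 ≤ 1 / (α - 1) * q := by
    refine one_le_mul_of_one_le_of_one_le ?_ hq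
    rw [le_div_iff₀ (by linarith)]
    linarith
  have hB : Measurable fun u => ENNReal.ofReal (b u) := ENNReal.measurable_ofReal.comp hb
  have hG : Measurable fun z => ENNReal.ofReal (g z) := ENNReal.measurable_ofReal.comp hg
  refine morreyE_le_of_cylAvg_le hq0 fun ρ hρ t x => ?_
  simp_rw [← ENNReal.rpow_mul]
  refine cylAvg_le_of_ae_setLIntegral_le hρ ?_ ?_
  · exact ((hB.comp (measurable_fst.snd.sub measurable_snd)).mul
      (hG.comp (measurable_fst.fst.prodMk measurable_snd))).lintegral_prod_right'.pow_const _
  filter_upwards [hmass] with s hs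
  refine setLIntegral_closedBall_rpow_conv_le hB (hG.comp measurable_prodMk_left) hs hp
    (fun c => ?_) x
  calc ∫⁻ u in Metric.closedBall c ρ, ENNReal.ofReal (b u) ^ (1 / (α - 1) * q)
      = ∫⁻ u in Metric.closedBall c ρ, (ENNReal.ofReal (b u) ^ (1 / (α - 1))) ^ q := by
        simp_rw [ENNReal.rpow_mul]
    _ ≤ _ := setLIntegral_closedBall_rpow_le_morreyM hq0 hρ _ c
    _ = _ := by rw [Measure.addHaar_closedBall_center, Measure.addHaar_closedBall_center volume x]

/-- Young-type inequality for Morrey norms: if `∫ g(s,·) ≤ 1` for a.e. `s`,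
then `‖(b ∗ g)^{1/(α-1)}‖_{E_q} ≤ ‖b^{1/(α-1)}‖_{M_q}` (spatial convolution). -/
theorem stmt_11 (d : ℕ) (hd : 2 ≤ d) (α q : ℝ) (hα1 : 1 < α) (hα2 : α < 2) (hq : 1 ≤ q)
    (b : Spc d → ℝ) (hb : Measurable b) (hb0 : ∀ x, 0 ≤ b x)
    (g : ℝ × Spc d → ℝ) (hg : Measurable g) (hg0 : ∀ z, 0 ≤ g z)
    (hmass : ∀ᵐ s : ℝ, (∫⁻ y : Spc d, ENNReal.ofReal (g (s, y))) ≤ 1) :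
    morreyE d α q
        (fun z =>
          (∫⁻ y : Spc d, ENNReal.ofReal (b (z.2 - y)) * ENNReal.ofReal (g (z.1, y)))
            ^ (1 / (α - 1))) ≤
      morreyM d q (fun x => ENNReal.ofReal (b x) ^ (1 / (α - 1))) :=
  stmt_11_general d α q hα1 hα2 hq b hb g hg hmass
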